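/- arXiv:2605.28256 — 2 statements merged into one kernel-verified Lean document; each statement's English description precedes it below -/
import Mathlib

section
/- Let R be a commutative k-algebra, L a Lie–Rinehart algebra over R, and E an R-module. Define on the k-module E ⊕ Hom_R(L, E) the multiplication f · (s, σ) = (f s, f σ + s ⊗ d_V f), where (d_V f)(X) = ρ(X)(f). This multiplication makes E ⊕ Hom_R(L, E) into an R-module. -/
/-!
The first component is the R-module E itself, so only the second component needs checking.
There `f ↦ s ⊗ d_V f` is additive, kills `1`, and obeys the Leibniz rule
`s ⊗ d_V (f g) = f • (s ⊗ d_V g) + (g s) ⊗ d_V f` because each `ρ X` is a derivation;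
the Leibniz term is exactly the correction that makes `f · (g · p) = (f g) · p`.
-/

/-- The element `s ⊗ d_V f ∈ Hom_R(L, E)`, i.e. the map `X ↦ ρ(X)(f) • s`. -/
def sdV {k R L E : Type*} [CommRing k] [CommRing R] [Algebra k R]
    [LieRing L] [Module R L] [AddCommGroup E] [Module R E]
    (ρ : L →ₗ[R] Derivation k R R) (f : R) (s : E) : L →ₗ[R] E where
  toFun X := ρ X f • s
  map_add' X Y := by simp [add_smul]
  map_smul' c X := by simp [smul_smul]

/-- The twisted multiplication on `J¹_V(E) = E ⊕ Hom_R(L,E)`: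
`f · (s, σ) = (f s, f σ + s ⊗ d_V f)`. -/
def jsmul {k R L E : Type*} [CommRing k] [CommRing R] [Algebra k R]
    [LieRing L] [Module R L] [AddCommGroup E] [Module R E]
    (ρ : L →ₗ[R] Derivation k R R) (f : R) (p : E × (L →ₗ[R] E)) :
    E × (L →ₗ[R] E) :=
  (f • p.1, f • p.2 + sdV ρ f p.1)

section JetModule

variable {k R L E : Type*} [CommRing k] [CommRing R] [Algebra k R]
    [LieRing L] [Module R L] [AddCommGroup E] [Module R E]
    (ρ : L →ₗ[R] Derivation k R R)

@[simp]
theorem sdV_apply (f : R) (s : E) (X : L) : sdV ρ f s X = ρ X f • s := rfl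

@[simp]
theorem sdV_one (s : E) : sdV ρ 1 s = 0 := by
  ext X
  simp

@[simp]
theorem sdV_zero_left (s : E) : sdV ρ 0 s = 0 := by
  ext X
  simp

@[simp]
theorem sdV_zero_right (f : R) : sdV ρ f (0 : E) = 0 := by
  ext X
  simp

theorem sdV_add_left (f g : R) (s : E) : sdV ρ (f + g) s = sdV ρ f s + sdV ρ g s := by
  ext X
  simp [add_smul]

theorem sdV_add_right (f : R) (s t : E) : sdV ρ f (s + t) = sdV ρ f s + sdV ρ f t := by
  ext X
  simp

theorem sdV_mul (f g : R) (s : E) : sdV ρ (f * g) s = f • sdV ρ g s + sdV ρ f (g • s) := by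
  ext X
  simp [Derivation.leibniz, add_smul, smul_smul, mul_comm]

theorem jsmul_one (p : E × (L →ₗ[R] E)) : jsmul ρ 1 p = p := by
  simp [jsmul]

theorem jsmul_mul (f g : R) (p : E × (L →ₗ[R] E)) :
    jsmul ρ (f * g) p = jsmul ρ f (jsmul ρ g p) := by
  simp only [jsmul, sdV_mul, mul_smul, smul_add]
  ext <;> simp only [add_assoc]

theorem jsmul_add (f : R) (p q : E × (L →ₗ[R] E)) :
    jsmul ρ f (p + q) = jsmul ρ f p + jsmul ρ f q := by
  simp only [jsmul, Prod.fst_add, Prod.snd_add, smul_add, sdV_add_right, Prod.mk_add_mk]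
  ext <;> simp only [add_add_add_comm]

theorem add_jsmul (f g : R) (p : E × (L →ₗ[R] E)) :
    jsmul ρ (f + g) p = jsmul ρ f p + jsmul ρ g p := by
  simp only [jsmul, add_smul, sdV_add_left, Prod.mk_add_mk]
  ext <;> simp only [add_add_add_comm]

theorem zero_jsmul (p : E × (L →ₗ[R] E)) : jsmul ρ 0 p = 0 := by
  simp [jsmul]

theorem jsmul_zero (f : R) : jsmul ρ f (0 : E × (L →ₗ[R] E)) = 0 := by
  simp [jsmul]

end JetModule

/-- The twisted multiplication satisfies all the axioms of an R-module structure
on `E ⊕ Hom_R(L, E)` (the underlying additive group being the product group). -/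
theorem jet_module_axioms
    {k R L E : Type*} [CommRing k] [CommRing R] [Algebra k R]
    [LieRing L] [Module R L] [AddCommGroup E] [Module R E]
    (ρ : L →ₗ[R] Derivation k R R) :
    (∀ p : E × (L →ₗ[R] E), jsmul ρ 1 p = p) ∧
    (∀ (f g : R) (p : E × (L →ₗ[R] E)), jsmul ρ (f * g) p = jsmul ρ f (jsmul ρ g p)) ∧
    (∀ (f : R) (p q : E × (L →ₗ[R] E)), jsmul ρ f (p + q) = jsmul ρ f p + jsmul ρ f q) ∧
    (∀ (f g : R) (p : E × (L →ₗ[R] E)), jsmul ρ (f + g) p = jsmul ρ f p + jsmul ρ g p) ∧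
    (∀ p : E × (L →ₗ[R] E), jsmul ρ 0 p = 0) ∧
    (∀ f : R, jsmul ρ f (0 : E × (L →ₗ[R] E)) = 0) :=
  ⟨jsmul_one ρ, jsmul_mul ρ, jsmul_add ρ, add_jsmul ρ, zero_jsmul ρ, jsmul_zero ρ⟩
end

section
/- If a vector bundle E on P¹ admits a holomorphic connection ∇ : E → E ⊗ Ω¹_{P¹} (a C-linear sheaf map with ∇(fs) = f∇s + s⊗df), then E is holomorphically trivial; equivalently, in the Grothendieck decomposition E ≅ ⊕ O(a_i), all a_i = 0. -/
/-!
Compare the coefficients of `t¹` in the diagonal gluing relation. The left side `B(1/t)` only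
involves powers `t^k` with `k ≤ 0`, and `t² · A(t)` only powers with `k ≥ 2`, so the residue
term `a_i t` must vanish on its own.
-/

open LaurentPolynomial

namespace LaurentPolynomial

section Semiring

variable {R : Type*} [Semiring R]

lemma coeff_T_mul (m n : ℤ) (f : R[T;T⁻¹]) : (T m * f).coeff n = f.coeff (n - m) := by
  rw [T, AddMonoidAlgebra.coeff_single_mul_apply, one_mul, neg_add_eq_sub]

lemma coeff_C_mul_T_self (c : R) (n : ℤ) : (C c * T n).coeff n = c := by
  rw [← single_eq_C_mul_T, AddMonoidAlgebra.coeff_single, Finsupp.single_eq_same]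

lemma coeff_toLaurent_of_neg (p : Polynomial R) {n : ℤ} (hn : n < 0) :
    (Polynomial.toLaurent p).coeff n = 0 := by
  rw [← Finsupp.notMem_support_iff, support_coeff_toLaurent]
  simp only [Finset.mem_map, Nat.castEmbedding_apply, not_exists, not_and]
  omega

end Semiring

lemma coeff_invert_toLaurent_of_pos {R : Type*} [CommSemiring R] (p : Polynomial R) {n : ℤ}
    (hn : 0 < n) : (invert (Polynomial.toLaurent p)).coeff n = 0 := by
  rw [invert_apply, coeff_toLaurent_of_neg p (by omega)]

end LaurentPolynomial

theorem bundle_with_connection_on_P1_is_trivial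
    {r : ℕ} (a : Fin r → ℤ)
    (A B : Matrix (Fin r) (Fin r) (Polynomial ℂ))
    (hglue : ∀ i j, invert (Polynomial.toLaurent (B i j))
      = -(T 2 * (T (a i - a j) * Polynomial.toLaurent (A i j)))
        + (if i = j then C ((a j : ℂ)) * T 1 else 0)) :
    ∀ i, a i = 0 := by
  intro i
  have hcoeff := congrArg (·.coeff 1) (hglue i i)
  simp only [if_pos, sub_self, T_zero, one_mul, AddMonoidAlgebra.coeff_add,
    AddMonoidAlgebra.coeff_neg, Finsupp.add_apply, Finsupp.neg_apply, coeff_T_mul,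
    coeff_toLaurent_of_neg _ (show (1 : ℤ) - 2 < 0 by norm_num), coeff_C_mul_T_self,
    coeff_invert_toLaurent_of_pos _ one_pos, neg_zero, zero_add] at hcoeff
  exact_mod_cast hcoeff.symm
end
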